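/- arXiv:2112.01667 — 8 statements merged into one kernel-verified Lean document; each statement's English description precedes it below -/
import Mathlib

section
/- Let R be a coverable ring, C a minimal cover of R by proper subrings, and M a maximal subring of R with M ∉ C. Then M is coverable and σ(M) ≤ σ(R). -/
/-- A (finite) cover of a ring by proper subrings. -/
def IsCover {R : Type*} [NonUnitalRing R] (C : Finset (NonUnitalSubring R)) : Prop :=
  (∀ S ∈ C, S ≠ ⊤) ∧ ∀ x : R, ∃ S ∈ C, x ∈ S

/-- If `C` is a minimal cover of a coverable ring `R` and `M` is a maximal subring of `R`
with `M ∉ C`, then `M` is coverable and `σ(M) ≤ σ(R)`. -/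
theorem stmt_2 {R : Type*} [NonUnitalRing R]
    (C : Finset (NonUnitalSubring R)) (hC : IsCover C)
    (hmin : ∀ C' : Finset (NonUnitalSubring R), IsCover C' → C.card ≤ C'.card)
    (M : NonUnitalSubring R) (hMproper : M ≠ ⊤)
    (hMmax : ∀ N : NonUnitalSubring R, M < N → N = ⊤)
    (hMC : M ∉ C) :
    ∃ D : Finset (NonUnitalSubring M), IsCover D ∧ D.card ≤ C.card := by
  classical
  refine ⟨C.image (fun S => S.comap (NonUnitalSubringClass.subtype M)), ⟨?_, ?_⟩, Finset.card_image_le⟩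
  · intro T hT
    obtain ⟨S, hS, rfl⟩ := Finset.mem_image.mp hT
    intro htop
    have hle : M ≤ S := by
      intro x hx
      have : (⟨x, hx⟩ : M) ∈ (⊤ : NonUnitalSubring M) := trivial
      rw [← htop] at this
      exact this
    rcases lt_or_eq_of_le hle with h | h
    · exact hC.1 S hS (hMmax S h)
    · exact hMC (h ▸ hS)
  · intro x
    obtain ⟨S, hS, hx⟩ := hC.2 (x : R)
    exact ⟨S.comap (NonUnitalSubringClass.subtype M),
      Finset.mem_image_of_mem _ hS, hx⟩
end

section
/- Let n ≥ 2, let d with 1 ≤ d ≤ n, let m ≥ 1 be a common divisor of n and d, and let q ≥ 2. Then |GL(d,q)| / |GL(d/m, q^m)| ≥ q^{d(d-1)(m-1)/m}, where |GL(k,r)| = ∏_{j=0}^{k-1}(r^k - r^j). -/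
/-- The order of the general linear group `GL(k, 𝔽_r)`: `∏_{j=0}^{k-1} (r^k - r^j)`. -/
def cardGL (k r : ℕ) : ℕ := ∏ j ∈ Finset.range k, (r ^ k - r ^ j)

/-!
With `d = m e`, the factors `q^d - q^(m i)`, `i < e`, of `|GL(d, q)|` are exactly the factors
`(q^m)^e - (q^m)^i` of `|GL(e, q^m)|`. Each of the remaining `d - e = e (m - 1)` factors
`q^d - q^j` with `j < d` is at least `q^(d-1)`.
-/

open Finset

theorem cardGL_pos {k r : ℕ} (hr : 1 < r) : 0 < cardGL k r :=
  prod_pos fun _ hj => Nat.sub_pos_of_lt (Nat.pow_lt_pow_right hr (mem_range.mp hj))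

theorem pow_pred_le_pow_sub_pow {q j k : ℕ} (hq : 2 ≤ q) (hjk : j < k) :
    q ^ (k - 1) ≤ q ^ k - q ^ j := by
  obtain ⟨k, rfl⟩ : ∃ k', k = k' + 1 := ⟨k - 1, by omega⟩
  have hj : q ^ j ≤ q ^ k := Nat.pow_le_pow_right (by omega) (by omega)
  have hdouble : q ^ k * 2 ≤ q ^ k * q := Nat.mul_le_mul_left _ hq
  rw [Nat.add_sub_cancel, pow_succ]
  omega

theorem pow_mul_prod_le_cardGL {k q : ℕ} (hq : 2 ≤ q) {s : Finset ℕ} (hs : s ⊆ range k) :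
    q ^ ((k - 1) * (k - #s)) * ∏ j ∈ s, (q ^ k - q ^ j) ≤ cardGL k q := by
  rw [cardGL, ← prod_sdiff hs]
  gcongr
  calc q ^ ((k - 1) * (k - #s)) = ∏ _j ∈ range k \ s, q ^ (k - 1) := by
        rw [prod_const, card_sdiff_of_subset hs, card_range, pow_mul]
    _ ≤ ∏ j ∈ range k \ s, (q ^ k - q ^ j) :=
        prod_le_prod' fun j hj => pow_pred_le_pow_sub_pow hq (mem_range.mp (mem_sdiff.mp hj).1)

theorem cardGL_pow_eq_prod_image {e m q : ℕ} (hm : 0 < m) :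
    cardGL e (q ^ m) = ∏ j ∈ (range e).image (m * ·), (q ^ (m * e) - q ^ j) := by
  rw [prod_image fun a _ b _ h => Nat.eq_of_mul_eq_mul_left hm h, cardGL]
  simp only [← pow_mul]

theorem pow_mul_cardGL_pow_le_cardGL {e m q : ℕ} (hm : 0 < m) (hq : 2 ≤ q) :
    q ^ (e * (m * e - 1) * (m - 1)) * cardGL e (q ^ m) ≤ cardGL (m * e) q := by
  have hs : (range e).image (m * ·) ⊆ range (m * e) := by
    simp only [subset_iff, mem_image, mem_range]
    rintro _ ⟨i, hi, rfl⟩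
    exact Nat.mul_lt_mul_of_pos_left hi hm
  have hcard : #((range e).image (m * ·)) = e := by
    rw [card_image_of_injective _ (mul_right_injective₀ hm.ne'), card_range]
  have hexp : e * (m * e - 1) * (m - 1) = (m * e - 1) * (m * e - #((range e).image (m * ·))) := by
    rw [hcard, mul_comm m e, ← Nat.mul_sub_one]
    ring
  rw [hexp, cardGL_pow_eq_prod_image hm]
  exact pow_mul_prod_le_cardGL hq hs

theorem stmt_6_general (d m q : ℕ)
    (hm : 1 ≤ m) (hmd : m ∣ d) (hq : 2 ≤ q) :
    (q : ℝ) ^ ((d / m) * (d - 1) * (m - 1)) ≤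
      (cardGL d q : ℝ) / (cardGL (d / m) (q ^ m) : ℝ) := by
  obtain ⟨e, rfl⟩ := hmd
  have hden : (0 : ℝ) < cardGL e (q ^ m) := by
    exact_mod_cast cardGL_pos (Nat.one_lt_pow (by omega) hq)
  rw [Nat.mul_div_cancel_left e hm, le_div_iff₀ hden]
  exact_mod_cast pow_mul_cardGL_pow_le_cardGL hm hq

/-- For `2 ≤ n`, `1 ≤ d ≤ n`, `m ≥ 1` a common divisor of `n` and `d`, and `q ≥ 2`,
`|GL(d,q)| / |GL(d/m, q^m)| ≥ q^{d(d-1)(m-1)/m}`. -/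
theorem stmt_6 (n d m q : ℕ) (hn : 2 ≤ n) (hd1 : 1 ≤ d) (hdn : d ≤ n)
    (hm : 1 ≤ m) (hmn : m ∣ n) (hmd : m ∣ d) (hq : 2 ≤ q) :
    (q : ℝ) ^ ((d / m) * (d - 1) * (m - 1)) ≤
      (cardGL d q : ℝ) / (cardGL (d / m) (q ^ m) : ℝ) :=
  stmt_6_general d m q hm hmd hq
end

section
/- Let n ≥ 5, let a be the smallest prime divisor of n, let 2 ≤ d < n - n/a, and let ℓ be a common prime divisor of n and d, with ℓ ≤ d and d ≠ n/2. Then for any prime power q, binom(n/ℓ, d/ℓ)_q · |GL(d/ℓ, q^ℓ)|/|GL(d,q)| · |GL((n-d)/ℓ, q^ℓ)|/|GL(n-d,q)| ≤ q^{-(ℓ-1)²-3}. -/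
/-- The Gaussian (`q`-)binomial coefficient `binom(n,k)_q`, via the product formula. -/
noncomputable def gbinom (q n k : ℕ) : ℝ :=
  ∏ i ∈ Finset.range k, ((q : ℝ) ^ (n - i) - 1) / ((q : ℝ) ^ (k - i) - 1)

/-!
Write `d = ℓ e` and `n - d = ℓ f`. Since `∏_{i ≥ 1} (1 - x ^ i) ≥ 1 / 4` for `x ≤ 1 / 2`, we have
`q ^ (k²) / 4 ≤ |GL(k, q)|` and `binom(e + f, e)_q ≤ 4 q ^ (e f)`, while trivially
`|GL(k, r)| ≤ r ^ (k²)`. Hence the left side is at most `64 q ^ (e f - ℓ (ℓ - 1) (e² + f²))`.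
The hypothesis `d < n - n / a` with `a ≤ ℓ` gives `e + f < ℓ f`, and `d ≠ n / 2` gives `e ≠ f`;
together they make this exponent small enough, except for `ℓ = 2, e = 1, f = 2` (that is, `n = 6`,
`d = 2`), where the left side is computed exactly.
-/

open Finset

theorem Finset.one_sub_sum_le_prod_one_sub {ι R : Type*} [CommRing R] [LinearOrder R]
    [IsStrictOrderedRing R] (s : Finset ι) {f : ι → R} (h0 : ∀ i ∈ s, 0 ≤ f i)
    (h1 : ∀ i ∈ s, f i ≤ 1) : 1 - ∑ i ∈ s, f i ≤ ∏ i ∈ s, (1 - f i) := by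
  classical
  induction s using Finset.induction_on with
  | empty => simp
  | insert a s ha ih =>
    rw [sum_insert ha, prod_insert ha]
    have hs := ih (fun i hi => h0 i (mem_insert_of_mem hi))
      (fun i hi => h1 i (mem_insert_of_mem hi))
    have ha0 := h0 a (mem_insert_self a s)
    have ha1 := h1 a (mem_insert_self a s)
    have hsum : 0 ≤ ∑ i ∈ s, f i := sum_nonneg fun i hi => h0 i (mem_insert_of_mem hi)
    nlinarith

theorem one_fourth_le_prod_one_sub_pow {x : ℝ} (h0 : 0 ≤ x) (h2 : x ≤ 1 / 2) (k : ℕ) :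
    1 / 4 ≤ ∏ i ∈ range k, (1 - x ^ (i + 1)) := by
  rcases k with _ | k
  · norm_num
  rw [prod_range_succ']
  have hW := one_sub_sum_le_prod_one_sub (range k) (f := fun i => x ^ (i + 2))
    (fun i _ => by positivity) (fun i _ => pow_le_one₀ h0 (by linarith))
  have hgeom : (1 - x) * ∑ i ∈ range k, x ^ (i + 2) ≤ x ^ 2 := by
    have : (1 - x) * ∑ i ∈ range k, x ^ (i + 2) = x ^ 2 * (1 - x ^ k) := by
      rw [← mul_neg_geom_sum, mul_sum, mul_sum, mul_sum]
      exact sum_congr rfl fun i _ => by ring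
    rw [this]
    nlinarith [pow_nonneg h0 k, pow_nonneg h0 2]
  simp only [zero_add, pow_one]
  nlinarith

theorem one_fourth_le_prod_one_sub_pow_sub {x : ℝ} (h0 : 0 ≤ x) (h2 : x ≤ 1 / 2) (k : ℕ) :
    1 / 4 ≤ ∏ i ∈ range k, (1 - x ^ (k - i)) := by
  rw [← prod_range_reflect]
  convert one_fourth_le_prod_one_sub_pow h0 h2 k using 3 with i hi
  have := mem_range.mp hi
  congr 2
  omega

theorem cast_cardGL_eq {r : ℕ} (hr : 0 < r) (k : ℕ) :
    (cardGL k r : ℝ) = (r : ℝ) ^ (k * k) * ∏ i ∈ range k, (1 - (r : ℝ)⁻¹ ^ (k - i)) := by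
  rw [pow_mul, ← card_range k, ← prod_const, card_range, ← prod_mul_distrib, cardGL,
    Nat.cast_prod]
  refine prod_congr rfl fun j hj => ?_
  have hjk := (mem_range.mp hj).le
  rw [Nat.cast_sub (Nat.pow_le_pow_right hr hjk), mul_sub, mul_one, inv_pow,
    ← pow_sub₀ _ (by positivity) (Nat.sub_le k j), Nat.sub_sub_self hjk]
  push_cast
  ring

theorem cardGL_le_pow (k r : ℕ) : cardGL k r ≤ r ^ (k * k) :=
  calc cardGL k r ≤ ∏ _j ∈ range k, r ^ k := prod_le_prod' fun _ _ => Nat.sub_le _ _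
    _ = r ^ (k * k) := by rw [prod_const, card_range, ← pow_mul, mul_comm]

theorem pow_div_four_le_cardGL {q : ℕ} (hq : 2 ≤ q) (k : ℕ) :
    (q : ℝ) ^ (k * k) / 4 ≤ cardGL k q := by
  have hx : (q : ℝ)⁻¹ ≤ 1 / 2 := by
    rw [one_div]; exact inv_anti₀ two_pos (by exact_mod_cast hq)
  rw [cast_cardGL_eq (by omega), div_eq_mul_one_div]
  gcongr
  exact one_fourth_le_prod_one_sub_pow_sub (by positivity) hx k

theorem pow_add_sub_one_div_le {Q : ℝ} (hQ : 1 < Q) (f : ℕ) {k : ℕ} (hk : 0 < k) :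
    (Q ^ (f + k) - 1) / (Q ^ k - 1) ≤ Q ^ f / (1 - Q⁻¹ ^ k) := by
  have hQk : 0 < Q ^ k - 1 := by linarith [one_lt_pow₀ hQ hk.ne']
  calc (Q ^ (f + k) - 1) / (Q ^ k - 1) ≤ Q ^ (f + k) / (Q ^ k - 1) := by gcongr; linarith
    _ = Q ^ f / (1 - Q⁻¹ ^ k) := by
      have : Q ^ k ≠ 0 := by positivity
      rw [pow_add, inv_pow]
      field_simp

theorem gbinom_add_le {q : ℕ} (hq : 2 ≤ q) (e f : ℕ) :
    gbinom q (e + f) e ≤ 4 * (q : ℝ) ^ (e * f) := by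
  have hq1 : (1 : ℝ) < q := by exact_mod_cast hq
  have hx : (q : ℝ)⁻¹ ≤ 1 / 2 := by
    rw [one_div]; exact inv_anti₀ two_pos (by exact_mod_cast hq)
  have hP := one_fourth_le_prod_one_sub_pow_sub (by positivity) hx e
  calc gbinom q (e + f) e ≤ ∏ i ∈ range e, (q : ℝ) ^ f / (1 - (q : ℝ)⁻¹ ^ (e - i)) := by
        refine prod_le_prod (fun i hi => ?_) (fun i hi => ?_)
        · have := mem_range.mp hi
          exact div_nonneg (sub_nonneg.2 (one_le_pow₀ hq1.le))
            (sub_nonneg.2 (one_le_pow₀ hq1.le))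
        · have := mem_range.mp hi
          rw [show e + f - i = f + (e - i) by omega]
          exact pow_add_sub_one_div_le hq1 f (by omega)
    _ = (q : ℝ) ^ (e * f) / ∏ i ∈ range e, (1 - (q : ℝ)⁻¹ ^ (e - i)) := by
        rw [prod_div_distrib, prod_const, card_range, ← pow_mul, mul_comm]
    _ ≤ 4 * (q : ℝ) ^ (e * f) := by
        rw [div_le_iff₀ (by linarith)]
        nlinarith [pow_pos (by positivity : (0 : ℝ) < q) (e * f)]

/-- The general estimate of `gbinom_mul_cardGL_div_le` loses a factor `64`, too much here; the
exact value of the left side is `1 / (q ^ 5 * (q - 1) ^ 3)`. -/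
theorem gbinom_three_one_mul_cardGL_div_le {q : ℕ} (hq : 2 ≤ q) :
    gbinom q 3 1 * ((cardGL 1 (q ^ 2) : ℝ) / cardGL 2 q) *
        ((cardGL 2 (q ^ 2) : ℝ) / cardGL 4 q) ≤ (q : ℝ) ^ (-4 : ℤ) := by
  have hQ : (2 : ℝ) ≤ q := by exact_mod_cast hq
  simp only [gbinom, cast_cardGL_eq (by positivity : 0 < q),
    cast_cardGL_eq (by positivity : 0 < q ^ 2), prod_range_succ, prod_range_zero]
  norm_num
  field_simp
  have h1 : (1 : ℝ) ≤ (q - 1) ^ 3 := one_le_pow₀ (by linarith)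
  have h3 : (0 : ℝ) < q ^ 3 - 1 := by nlinarith
  have h2 : (0 : ℝ) < q ^ 2 - 1 := by nlinarith
  have h4 : (0 : ℝ) < q ^ 4 - 1 := by nlinarith
  calc _ = 1 / ((q : ℝ) - 1) ^ 3 := by field_simp
    _ ≤ 1 := (div_le_one (by linarith)).2 h1
    _ ≤ q := by linarith

theorem cardGL_pow_div_cardGL_mul_le {q : ℕ} (hq : 2 ≤ q) (ℓ e : ℕ) :
    (cardGL e (q ^ ℓ) : ℝ) / cardGL (ℓ * e) q ≤
      4 * (q : ℝ) ^ ((ℓ : ℤ) * e ^ 2 - ((ℓ : ℤ) * e) ^ 2) := by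
  have hq0 : (0 : ℝ) < q := by positivity
  have hnum : (cardGL e (q ^ ℓ) : ℝ) ≤ (q : ℝ) ^ (ℓ * e ^ 2) := by
    rw [pow_mul, sq]; exact_mod_cast cardGL_le_pow e (q ^ ℓ)
  calc (cardGL e (q ^ ℓ) : ℝ) / cardGL (ℓ * e) q
      ≤ (q : ℝ) ^ (ℓ * e ^ 2) / ((q : ℝ) ^ ((ℓ * e) * (ℓ * e)) / 4) :=
        div_le_div₀ (by positivity) hnum (by positivity) (pow_div_four_le_cardGL hq _)
    _ = 4 * (q : ℝ) ^ ((ℓ : ℤ) * e ^ 2 - ((ℓ : ℤ) * e) ^ 2) := by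
        rw [zpow_sub₀ hq0.ne', ← sq]
        norm_cast
        ring

theorem exponent_le {l e f : ℤ} (hl : 2 ≤ l) (he : 1 ≤ e) (hf : 1 ≤ f) (hef : e ≠ f)
    (hlt : e + f < l * f) (hexc : ¬(l = 2 ∧ e = 1 ∧ f = 2)) :
    6 + (e * f + (l * e ^ 2 - (l * e) ^ 2) + (l * f ^ 2 - (l * f) ^ 2)) ≤ -(l - 1) ^ 2 - 3 := by
  rcases hl.eq_or_lt with rfl | hl3
  · have hef : e < f := by omega
    have hf3 : 3 ≤ f := by omega
    nlinarith
  · have hs : 5 ≤ e ^ 2 + f ^ 2 := by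
      rcases (show 2 ≤ e ∨ 2 ≤ f by omega) with h | h <;> nlinarith
    have hll : 6 ≤ l * (l - 1) := by nlinarith
    nlinarith [mul_nonneg (by linarith : 0 ≤ l * (l - 1) - 1)
      (by linarith : (0 : ℤ) ≤ e ^ 2 + f ^ 2 - 5), sq_nonneg (e - f)]

theorem gbinom_mul_cardGL_div_le {q ℓ e f : ℕ} (hq : 2 ≤ q) (hℓ : 2 ≤ ℓ) (he : 1 ≤ e)
    (hf : 1 ≤ f) (hef : e ≠ f) (hlt : e + f < ℓ * f) :
    gbinom q (e + f) e * ((cardGL e (q ^ ℓ) : ℝ) / cardGL (ℓ * e) q) *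
        ((cardGL f (q ^ ℓ) : ℝ) / cardGL (ℓ * f) q) ≤
      (q : ℝ) ^ (-(((ℓ : ℤ) - 1) ^ 2) - 3) := by
  by_cases hexc : ℓ = 2 ∧ e = 1 ∧ f = 2
  · obtain ⟨rfl, rfl, rfl⟩ := hexc
    simpa using gbinom_three_one_mul_cardGL_div_le hq
  have hq0 : (q : ℝ) ≠ 0 := by positivity
  have hG : gbinom q (e + f) e ≤ 4 * (q : ℝ) ^ ((e : ℤ) * f) := by
    rw [← Nat.cast_mul, zpow_natCast]
    exact gbinom_add_le hq e f
  have hE := cardGL_pow_div_cardGL_mul_le hq ℓ e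
  have hF := cardGL_pow_div_cardGL_mul_le hq ℓ f
  set a : ℤ := (e : ℤ) * f
  set b : ℤ := (ℓ : ℤ) * e ^ 2 - ((ℓ : ℤ) * e) ^ 2
  set c : ℤ := (ℓ : ℤ) * f ^ 2 - ((ℓ : ℤ) * f) ^ 2
  calc _ ≤ (4 * (q : ℝ) ^ a) * (4 * (q : ℝ) ^ b) * (4 * (q : ℝ) ^ c) := by gcongr
    _ = 2 ^ 6 * (q : ℝ) ^ (a + b + c) := by
        rw [zpow_add₀ hq0, zpow_add₀ hq0]
        ring
    _ ≤ (q : ℝ) ^ (6 : ℤ) * (q : ℝ) ^ (a + b + c) := by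
        rw [zpow_ofNat]
        gcongr
        exact_mod_cast hq
    _ ≤ (q : ℝ) ^ (-(((ℓ : ℤ) - 1) ^ 2) - 3) := by
        rw [← zpow_add₀ hq0]
        refine zpow_le_zpow_right₀ (by exact_mod_cast hq.trans' one_le_two) ?_
        exact exponent_le (by omega) (by omega) (by omega) (by omega) (by exact_mod_cast hlt)
          (by exact_mod_cast hexc)

theorem stmt_7_general (n d ℓ q : ℕ) (hd2 : 2 ≤ d)
    (hdlt : d < n - n / n.minFac) (hℓ : ℓ.Prime) (hℓn : ℓ ∣ n) (hℓd : ℓ ∣ d)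
    (hdhalf : 2 * d ≠ n) (hq : IsPrimePow q) :
    gbinom q (n / ℓ) (d / ℓ) * ((cardGL (d / ℓ) (q ^ ℓ) : ℝ) / (cardGL d q : ℝ)) *
        ((cardGL ((n - d) / ℓ) (q ^ ℓ) : ℝ) / (cardGL (n - d) q : ℝ)) ≤
      (q : ℝ) ^ (-(((ℓ : ℤ) - 1) ^ 2) - 3) := by
  obtain ⟨e, rfl⟩ := hℓd
  obtain ⟨f, hf⟩ : ℓ ∣ n - ℓ * e := Nat.dvd_sub hℓn (dvd_mul_right ℓ e)
  have hn : n = ℓ * (e + f) := by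
    rw [mul_add, ← hf, Nat.add_sub_cancel' (hdlt.le.trans (Nat.sub_le _ _))]
  have hℓ0 := hℓ.pos
  have hlt : e + f < ℓ * f :=
    calc e + f = n / ℓ := by rw [hn, Nat.mul_div_cancel_left _ hℓ0]
      _ ≤ n / n.minFac :=
        Nat.div_le_div_left (Nat.minFac_le_of_dvd hℓ.two_le hℓn) (Nat.minFac_pos n)
      _ < ℓ * f := by rw [← hf]; exact Nat.lt_sub_of_add_lt (Nat.add_lt_of_lt_sub' hdlt)
  rw [hf, hn, Nat.mul_div_cancel_left _ hℓ0, Nat.mul_div_cancel_left _ hℓ0,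
    Nat.mul_div_cancel_left _ hℓ0]
  refine gbinom_mul_cardGL_div_le hq.two_le hℓ.two_le ?_ ?_ ?_ hlt
  · exact Nat.pos_of_ne_zero (by rintro rfl; omega)
  · exact Nat.pos_of_ne_zero (by rintro rfl; omega)
  · rintro rfl
    exact hdhalf (by rw [hn]; ring)

/-- For `n ≥ 5`, `a` the smallest prime divisor of `n`, `2 ≤ d < n - n/a`, and `ℓ` a common
prime divisor of `n` and `d` (so `ℓ ≤ d` and `d ≠ n/2`), for any prime power `q`:
`binom(n/ℓ,d/ℓ)_q · |GL(d/ℓ,q^ℓ)|/|GL(d,q)| · |GL((n-d)/ℓ,q^ℓ)|/|GL(n-d,q)| ≤ q^{-(ℓ-1)²-3}`. -/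
theorem stmt_7 (n d ℓ q : ℕ) (hn : 5 ≤ n) (hd2 : 2 ≤ d)
    (hdlt : d < n - n / n.minFac) (hℓ : ℓ.Prime) (hℓn : ℓ ∣ n) (hℓd : ℓ ∣ d)
    (hℓle : ℓ ≤ d) (hdhalf : 2 * d ≠ n) (hq : IsPrimePow q) :
    gbinom q (n / ℓ) (d / ℓ) * ((cardGL (d / ℓ) (q ^ ℓ) : ℝ) / (cardGL d q : ℝ)) *
        ((cardGL ((n - d) / ℓ) (q ^ ℓ) : ℝ) / (cardGL (n - d) q : ℝ)) ≤
      (q : ℝ) ^ (-(((ℓ : ℤ) - 1) ^ 2) - 3) :=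
  stmt_7_general n d ℓ q hd2 hdlt hℓ hℓn hℓd hdhalf hq
end

section
/- For every prime power q ≥ 2 and every integer n ≥ 2, if a denotes the smallest prime divisor of n and d ≥ n − n/a, then (1/a)·∏_{k=1, a∤k}^{n-1}(q^n − q^k) + Σ_{k=1, a∤k}^{⌊n/2⌋} binom(n,k)_q ≤ q^{nd}, with equality only when n = q = 2 and d = 1. -/
/-!
For `n ≥ 3` the inequality is strict with room to spare. With `a = minFac n`, the product has
`n - n/a` factors, each at most `q^n`, and the first one is `q^n - q`; so after dividing by
`a ≥ 2` it is at most `q^{n(n - n/a)}/2 - q^{n(n - n/a - 1) + 1}/2`. Each Gaussian binomial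
`binom(n,k)_q` is at most `q^{k(n+1-k)}`, and these bounds at least double from `k` to `k + 1`
while `k < n/2`, so the sum is at most `2 q^{E}` with `E = ⌊n/2⌋(n + 1 - ⌊n/2⌋)`; since
`E + 2 ≤ n(n - ⌊n/2⌋) ≤ n(n - n/a)`, this is at most `q^{n(n - n/a)}/2`. For `n = 2` the left-hand
side is `(q² + q + 2)/2 ≤ q² ≤ q^{2d}`, with equality only for `q = 2`, `d = 1`.
-/

open Finset

noncomputable def coveringFormula (q n : ℕ) : ℝ :=
  (∏ k ∈ (Finset.Icc 1 (n - 1)).filter (fun k => ¬ n.minFac ∣ k),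
      ((q : ℝ) ^ n - (q : ℝ) ^ k)) / (n.minFac : ℝ) +
    ∑ k ∈ (Finset.Icc 1 (n / 2)).filter (fun k => ¬ n.minFac ∣ k), gbinom q n k

lemma pow_sub_one_div_pow_sub_one_le {x : ℝ} (hx : 2 ≤ x) {m j : ℕ} (hj : 1 ≤ j) (hjm : j ≤ m) :
    (x ^ m - 1) / (x ^ j - 1) ≤ x ^ (m + 1 - j) := by
  have hxj : x ≤ x ^ j := le_self_pow₀ (by linarith) (by omega)
  have hmul : x ^ (m + 1 - j) * x ^ j = x * x ^ m := by
    rw [← pow_add, ← pow_succ']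
    congr 1
    omega
  have hle : x ^ (m + 1 - j) ≤ x ^ m := pow_le_pow_right₀ (by linarith) (by omega)
  rw [div_le_iff₀ (by linarith)]
  nlinarith [pow_nonneg (show (0 : ℝ) ≤ x by linarith) m]

lemma gbinom_le_pow {q n k : ℕ} (hq : 2 ≤ q) (hkn : k ≤ n) :
    gbinom q n k ≤ (q : ℝ) ^ (k * (n + 1 - k)) := by
  have hq1 : (1 : ℝ) ≤ q := by exact_mod_cast hq.trans' one_le_two
  calc gbinom q n k ≤ ∏ _i ∈ range k, (q : ℝ) ^ (n + 1 - k) := by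
        refine prod_le_prod (fun i _ => div_nonneg ?_ ?_) fun i hi => ?_
        · linarith [one_le_pow₀ (n := n - i) hq1]
        · linarith [one_le_pow₀ (n := k - i) hq1]
        · have hik : i < k := mem_range.mp hi
          have hexp : n + 1 - k = n - i + 1 - (k - i) := by omega
          rw [hexp]
          exact pow_sub_one_div_pow_sub_one_le (by exact_mod_cast hq) (by omega) (by omega)
    _ = (q : ℝ) ^ (k * (n + 1 - k)) := by rw [prod_const, card_range, ← pow_mul, mul_comm]

lemma sum_range_succ_le_two_mul {a : ℕ → ℝ} {f : ℕ} (h0 : 0 ≤ a 0)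
    (h : ∀ k < f, 2 * a k ≤ a (k + 1)) : ∑ k ∈ range (f + 1), a k ≤ 2 * a f := by
  induction f with
  | zero => simp only [zero_add, sum_range_one]; linarith
  | succ f ih =>
    rw [sum_range_succ]
    linarith [ih fun k hk => h k (by omega), h f (by omega)]

lemma sum_gbinom_le {q n : ℕ} (hq : 2 ≤ q) {s : Finset ℕ} (hs : ∀ k ∈ s, k ≤ n / 2) :
    ∑ k ∈ s, gbinom q n k ≤ 2 * (q : ℝ) ^ (n / 2 * (n + 1 - n / 2)) := by
  have hq2 : (2 : ℝ) ≤ q := by exact_mod_cast hq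
  have hdouble : ∀ k < n / 2,
      2 * (q : ℝ) ^ (k * (n + 1 - k)) ≤ (q : ℝ) ^ ((k + 1) * (n + 1 - (k + 1))) := by
    intro k hk
    have hexp : (k + 1) * (n + 1 - (k + 1)) = k * (n + 1 - k) + (n - 2 * k) := by
      zify [show k + 1 ≤ n + 1 by omega, show k ≤ n + 1 by omega, show 2 * k ≤ n by omega]
      ring
    rw [hexp, pow_add, mul_comm]
    gcongr
    exact hq2.trans (le_self_pow₀ (by linarith) (by omega))
  calc ∑ k ∈ s, gbinom q n k ≤ ∑ k ∈ s, (q : ℝ) ^ (k * (n + 1 - k)) :=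
        sum_le_sum fun k hk => gbinom_le_pow hq (by have := hs k hk; omega)
    _ ≤ ∑ k ∈ range (n / 2 + 1), (q : ℝ) ^ (k * (n + 1 - k)) :=
        sum_le_sum_of_subset_of_nonneg
          (fun k hk => mem_range.mpr (Nat.lt_succ_of_le (hs k hk))) fun _ _ _ => by positivity
    _ ≤ 2 * (q : ℝ) ^ (n / 2 * (n + 1 - n / 2)) :=
        sum_range_succ_le_two_mul (by positivity) hdouble

lemma prod_pow_sub_pow_le {x : ℝ} (hx : 1 ≤ x) {n : ℕ} {F : Finset ℕ} (h1 : 1 ∈ F)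
    (hF : ∀ k ∈ F, k ≤ n) : ∏ k ∈ F, (x ^ n - x ^ k) ≤ (x ^ n - x) * x ^ (n * (#F - 1)) := by
  have hnonneg : ∀ k ∈ F, 0 ≤ x ^ n - x ^ k := fun k hk =>
    sub_nonneg.mpr (pow_le_pow_right₀ hx (hF k hk))
  rw [← mul_prod_erase F _ h1, pow_one]
  refine mul_le_mul_of_nonneg_left ?_ (by simpa using hnonneg 1 h1)
  calc ∏ k ∈ F.erase 1, (x ^ n - x ^ k) ≤ ∏ _k ∈ F.erase 1, x ^ n :=
        prod_le_prod (fun k hk => hnonneg k (mem_of_mem_erase hk))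
          fun k _ => sub_le_self _ (by positivity)
    _ = x ^ (n * (#F - 1)) := by rw [prod_const, card_erase_of_mem h1, ← pow_mul]

lemma card_filter_not_dvd_Icc_one_sub_one {a n : ℕ} (han : a ∣ n) :
    #{k ∈ Icc 1 (n - 1) | ¬ a ∣ k} = n - n / a := by
  have hIoc : {k ∈ Icc 1 (n - 1) | ¬ a ∣ k} = {k ∈ Ioc 0 n | ¬ a ∣ k} := by
    ext k
    simp only [mem_filter, mem_Icc, mem_Ioc]
    constructor
    · rintro ⟨hk, hka⟩
      exact ⟨⟨by omega, by omega⟩, hka⟩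
    · rintro ⟨hk, hka⟩
      refine ⟨⟨by omega, ?_⟩, hka⟩
      rcases hk.2.lt_or_eq with hlt | rfl
      · omega
      · exact absurd han hka
  have hsplit := card_filter_add_card_filter_not (s := Ioc 0 n) (a ∣ ·)
  rw [Nat.Ioc_filter_dvd_card_eq_div, Nat.card_Ioc] at hsplit
  rw [hIoc]
  omega

lemma half_mul_add_two_le {n : ℕ} (hn : 3 ≤ n) :
    n / 2 * (n + 1 - n / 2) + 2 ≤ n * (n - n / 2) := by
  obtain ⟨h, rfl | rfl⟩ : ∃ h, n = 2 * h ∨ n = 2 * h + 1 := ⟨n / 2, by omega⟩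
  · rw [show 2 * h / 2 = h by omega, show 2 * h + 1 - h = h + 1 by omega,
      show 2 * h - h = h by omega]
    nlinarith [show 2 ≤ h by omega]
  · rw [show (2 * h + 1) / 2 = h by omega, show 2 * h + 1 + 1 - h = h + 2 by omega,
      show 2 * h + 1 - h = h + 1 by omega]
    nlinarith

lemma coveringFormula_lt {q n : ℕ} (hq : 2 ≤ q) (hn : 3 ≤ n) :
    coveringFormula q n < (q : ℝ) ^ (n * (n - n / n.minFac)) := by
  set a := n.minFac
  set c := n - n / a
  set E := n / 2 * (n + 1 - n / 2)
  have hq2 : (2 : ℝ) ≤ q := by exact_mod_cast hq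
  have ha : 2 ≤ a := (Nat.minFac_prime (by omega)).two_le
  have hc : n - n / 2 ≤ c := Nat.sub_le_sub_left (Nat.div_le_div_left ha two_pos) n
  have hsplit : (q : ℝ) ^ (n * c) = q ^ n * q ^ (n * (c - 1)) := by
    rw [← pow_add]
    congr 1
    rw [Nat.mul_sub_one]
    have : n ≤ n * c := Nat.le_mul_of_pos_right n (by omega)
    omega
  have hP : (∏ k ∈ (Icc 1 (n - 1)).filter (fun k => ¬ a ∣ k), ((q : ℝ) ^ n - (q : ℝ) ^ k)) / a
      ≤ ((q : ℝ) ^ n - q) * q ^ (n * (c - 1)) / 2 := by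
    have hprod := prod_pow_sub_pow_le (x := q) (by linarith) (n := n)
      (F := (Icc 1 (n - 1)).filter (fun k => ¬ a ∣ k))
      (mem_filter.mpr ⟨mem_Icc.mpr ⟨le_rfl, by omega⟩,
        fun h => by have := Nat.le_of_dvd one_pos h; omega⟩)
      (fun k hk => by simp only [mem_filter, mem_Icc] at hk; omega)
    rw [card_filter_not_dvd_Icc_one_sub_one (Nat.minFac_dvd n)] at hprod
    have hqn : (q : ℝ) ≤ q ^ n := le_self_pow₀ (by linarith) (by omega)
    exact div_le_div₀ (mul_nonneg (by linarith) (by positivity)) hprod two_pos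
      (by exact_mod_cast ha)
  have hS := sum_gbinom_le (n := n) hq (s := (Icc 1 (n / 2)).filter (fun k => ¬ a ∣ k))
    (fun k hk => by simp only [mem_filter, mem_Icc] at hk; omega)
  have hE : 4 * (q : ℝ) ^ E ≤ q ^ n * q ^ (n * (c - 1)) := by
    rw [← hsplit]
    calc 4 * (q : ℝ) ^ E ≤ q ^ 2 * q ^ E := by gcongr; nlinarith
      _ = q ^ (E + 2) := by ring
      _ ≤ q ^ (n * c) := pow_le_pow_right₀ (by linarith)
          ((half_mul_add_two_le hn).trans (Nat.mul_le_mul_left n hc))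
  have hX : 0 < (q : ℝ) * q ^ (n * (c - 1)) := by positivity
  unfold coveringFormula
  rw [hsplit]
  linarith

lemma coveringFormula_two {q : ℕ} (hq : 2 ≤ q) :
    coveringFormula q 2 = ((q : ℝ) ^ 2 + q + 2) / 2 := by
  have hq1 : (q : ℝ) - 1 ≠ 0 := by
    have : (2 : ℝ) ≤ q := by exact_mod_cast hq
    linarith
  have hg : gbinom q 2 1 = q + 1 := by
    rw [gbinom, prod_range_one, div_eq_iff (by simpa using hq1)]
    ring
  have hF : (Icc 1 (2 - 1)).filter (fun k => ¬ (2 : ℕ) ∣ k) = {1} := by decide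
  rw [coveringFormula, Nat.minFac_two, hF, prod_singleton, sum_singleton, hg]
  push_cast
  ring

lemma half_sq_add_add_two_le_pow {q d : ℕ} (hq : 2 ≤ q) (hd : 1 ≤ d) :
    ((q : ℝ) ^ 2 + q + 2) / 2 ≤ (q : ℝ) ^ (2 * d) ∧
      (((q : ℝ) ^ 2 + q + 2) / 2 = (q : ℝ) ^ (2 * d) → q = 2 ∧ d = 1) := by
  have hq2 : (2 : ℝ) ≤ q := by exact_mod_cast hq
  have hsq : ((q : ℝ) ^ 2 + q + 2) / 2 ≤ q ^ 2 := by nlinarith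
  have hpow : (q : ℝ) ^ 2 ≤ q ^ (2 * d) := pow_le_pow_right₀ (by linarith) (by omega)
  refine ⟨hsq.trans hpow, fun heq => ?_⟩
  have hsq_eq : (q : ℝ) ^ 2 = q ^ (2 * d) := le_antisymm hpow (heq ▸ hsq)
  have hq_eq : (q : ℝ) = 2 := by nlinarith
  refine ⟨by exact_mod_cast hq_eq, ?_⟩
  rw [hq_eq] at hsq_eq
  have := Nat.pow_right_injective le_rfl (by exact_mod_cast hsq_eq : 2 ^ 2 = 2 ^ (2 * d))
  omega

theorem stmt_9_general (n q d : ℕ) (hn : 2 ≤ n) (hq2 : 2 ≤ q)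
    (hd : n - n / n.minFac ≤ d) :
    (∏ k ∈ (Finset.Icc 1 (n - 1)).filter (fun k => ¬ n.minFac ∣ k),
        ((q : ℝ) ^ n - (q : ℝ) ^ k)) / (n.minFac : ℝ) +
      ∑ k ∈ (Finset.Icc 1 (n / 2)).filter (fun k => ¬ n.minFac ∣ k), gbinom q n k ≤
      (q : ℝ) ^ (n * d) ∧
    ((∏ k ∈ (Finset.Icc 1 (n - 1)).filter (fun k => ¬ n.minFac ∣ k),
        ((q : ℝ) ^ n - (q : ℝ) ^ k)) / (n.minFac : ℝ) +
      ∑ k ∈ (Finset.Icc 1 (n / 2)).filter (fun k => ¬ n.minFac ∣ k), gbinom q n k =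
      (q : ℝ) ^ (n * d) → n = 2 ∧ q = 2 ∧ d = 1) := by
  change coveringFormula q n ≤ _ ∧ (coveringFormula q n = _ → _)
  obtain rfl | hn3 : n = 2 ∨ 3 ≤ n := by omega
  · rw [Nat.minFac_two] at hd
    rw [coveringFormula_two hq2]
    exact (half_sq_add_add_two_le_pow hq2 (by omega)).imp_right fun h heq => ⟨rfl, h heq⟩
  · have hlt : coveringFormula q n < (q : ℝ) ^ (n * d) :=
      (coveringFormula_lt hq2 hn3).trans_le
        (pow_le_pow_right₀ (by exact_mod_cast hq2.trans' one_le_two) (Nat.mul_le_mul_left n hd))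
    exact ⟨hlt.le, fun heq => absurd heq hlt.ne⟩

/-- For every prime power `q ≥ 2` and `n ≥ 2`, with `a` the smallest prime divisor of `n`
and `d ≥ n − n/a`:
`(1/a)·∏_{k=1, a∤k}^{n-1}(q^n − q^k) + Σ_{k=1, a∤k}^{⌊n/2⌋} binom(n,k)_q ≤ q^{nd}`,
with equality only when `n = q = 2` and `d = 1`. -/
theorem stmt_9 (n q d : ℕ) (hn : 2 ≤ n) (hq2 : 2 ≤ q) (hq : IsPrimePow q)
    (hd : n - n / n.minFac ≤ d) :
    (∏ k ∈ (Finset.Icc 1 (n - 1)).filter (fun k => ¬ n.minFac ∣ k),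
        ((q : ℝ) ^ n - (q : ℝ) ^ k)) / (n.minFac : ℝ) +
      ∑ k ∈ (Finset.Icc 1 (n / 2)).filter (fun k => ¬ n.minFac ∣ k), gbinom q n k ≤
      (q : ℝ) ^ (n * d) ∧
    ((∏ k ∈ (Finset.Icc 1 (n - 1)).filter (fun k => ¬ n.minFac ∣ k),
        ((q : ℝ) ^ n - (q : ℝ) ^ k)) / (n.minFac : ℝ) +
      ∑ k ∈ (Finset.Icc 1 (n / 2)).filter (fun k => ¬ n.minFac ∣ k), gbinom q n k =
      (q : ℝ) ^ (n * d) → n = 2 ∧ q = 2 ∧ d = 1) :=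
  stmt_9_general n q d hn hq2 hd
end

section
/- The ring of 2×2 upper triangular matrices over 𝔽₂ is the union of the three unital subrings S₁ = {diag(a,b)}, S₂ = {[[a,b],[0,a]]}, S₃ = {[[a,a+b],[0,b]]}, and hence has unital covering number at most 3. -/
/-- The ring of `2 × 2` upper triangular matrices over `𝔽₂`, as a subring of
`M₂(𝔽₂)`. -/
def UT : Subring (Matrix (Fin 2) (Fin 2) (ZMod 2)) where
  carrier := {M | M 1 0 = 0}
  zero_mem' := rfl
  one_mem' := by simp [Matrix.one_apply]
  add_mem' := by
    intro a b ha hb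
    simp only [Set.mem_setOf_eq] at *
    simp [Matrix.add_apply, ha, hb]
  neg_mem' := by
    intro a ha
    simp only [Set.mem_setOf_eq] at *
    simp [Matrix.neg_apply, ha]
  mul_mem' := by
    intro a b ha hb
    simp only [Set.mem_setOf_eq] at *
    rw [Matrix.mul_apply]
    simp [Fin.sum_univ_two, ha, hb]

def T₁ : Subring (Matrix (Fin 2) (Fin 2) (ZMod 2)) where
  carrier := {M | M 1 0 = 0 ∧ M 0 1 = 0}
  zero_mem' := ⟨rfl, rfl⟩
  one_mem' := by constructor <;> simp [Matrix.one_apply]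
  add_mem' := by
    intro a b ha hb
    simp only [Set.mem_setOf_eq] at *
    simp [Matrix.add_apply, ha.1, ha.2, hb.1, hb.2]
  neg_mem' := by
    intro a ha
    simp only [Set.mem_setOf_eq] at *
    simp [Matrix.neg_apply, ha.1, ha.2]
  mul_mem' := by
    intro a b ha hb
    simp only [Set.mem_setOf_eq] at *
    constructor <;> (rw [Matrix.mul_apply]; simp [Fin.sum_univ_two, ha.1, ha.2, hb.1, hb.2])

def T₂ : Subring (Matrix (Fin 2) (Fin 2) (ZMod 2)) where
  carrier := {M | M 1 0 = 0 ∧ M 0 0 = M 1 1}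
  zero_mem' := ⟨rfl, rfl⟩
  one_mem' := by constructor <;> simp [Matrix.one_apply]
  add_mem' := by
    intro a b ha hb
    simp only [Set.mem_setOf_eq] at *
    simp [Matrix.add_apply, ha.1, ha.2, hb.1, hb.2]
  neg_mem' := by
    intro a ha
    simp only [Set.mem_setOf_eq] at *
    simp [Matrix.neg_apply, ha.1, ha.2]
  mul_mem' := by
    intro a b ha hb
    simp only [Set.mem_setOf_eq] at *
    constructor <;>
      (simp only [Matrix.mul_apply, Fin.sum_univ_two, ha.1, hb.1, ha.2, hb.2]; ring)

def T₃ : Subring (Matrix (Fin 2) (Fin 2) (ZMod 2)) where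
  carrier := {M | M 1 0 = 0 ∧ M 0 1 = M 0 0 + M 1 1}
  zero_mem' := by constructor <;> simp
  one_mem' := by constructor <;> simp [Matrix.one_apply] <;> decide
  add_mem' := by
    intro a b ha hb
    simp only [Set.mem_setOf_eq] at *
    constructor
    · simp [Matrix.add_apply, ha.1, hb.1]
    · simp only [Matrix.add_apply, ha.2, hb.2]; ring
  neg_mem' := by
    intro a ha
    simp only [Set.mem_setOf_eq] at *
    constructor
    · simp [Matrix.neg_apply, ha.1]
    · simp only [Matrix.neg_apply, ha.2]; ring
  mul_mem' := by
    intro a b ha hb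
    simp only [Set.mem_setOf_eq] at *
    constructor
    · simp [Matrix.mul_apply, Fin.sum_univ_two, ha.1, hb.1]
    · simp only [Matrix.mul_apply, Fin.sum_univ_two, ha.1, hb.1, ha.2, hb.2,
        mul_zero, zero_mul, add_zero, zero_add]
      have h : ∀ x y z w : ZMod 2, x * (z + w) + (x + y) * w = x * z + y * w := by decide
      exact h _ _ _ _

/-- The ring of `2×2` upper triangular matrices over `𝔽₂` is the union of the three
unital subrings `S₁ = {diag(a,b)}`, `S₂ = {[[a,b],[0,a]]}`, `S₃ = {[[a,a+b],[0,b]]}`,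
hence has unital covering number at most `3`. -/
theorem stmt_16 :
    ∃ S₁ S₂ S₃ : Subring (Matrix (Fin 2) (Fin 2) (ZMod 2)),
      (S₁ : Set (Matrix (Fin 2) (Fin 2) (ZMod 2))) = {M | M 1 0 = 0 ∧ M 0 1 = 0} ∧
      (S₂ : Set (Matrix (Fin 2) (Fin 2) (ZMod 2))) = {M | M 1 0 = 0 ∧ M 0 0 = M 1 1} ∧
      (S₃ : Set (Matrix (Fin 2) (Fin 2) (ZMod 2))) =
        {M | M 1 0 = 0 ∧ M 0 1 = M 0 0 + M 1 1} ∧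
      S₁ < UT ∧ S₂ < UT ∧ S₃ < UT ∧
      ∀ M ∈ UT, M ∈ S₁ ∨ M ∈ S₂ ∨ M ∈ S₃ := by
  refine ⟨T₁, T₂, T₃, rfl, rfl, rfl, ?_, ?_, ?_, ?_⟩
  · constructor
    · intro M hM; exact hM.1
    · intro h
      have := h (show (!![0,1;0,0] : Matrix (Fin 2) (Fin 2) (ZMod 2)) ∈ UT by
        show _ = _; simp)
      have h2 : (!![0,1;0,0] : Matrix (Fin 2) (Fin 2) (ZMod 2)) 0 1 = 0 := this.2
      simp at h2
  · constructor
    · intro M hM; exact hM.1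
    · intro h
      have := h (show (!![1,0;0,0] : Matrix (Fin 2) (Fin 2) (ZMod 2)) ∈ UT by
        show _ = _; simp)
      have h2 := this.2
      simp at h2
  · constructor
    · intro M hM; exact hM.1
    · intro h
      have := h (show (!![1,0;0,0] : Matrix (Fin 2) (Fin 2) (ZMod 2)) ∈ UT by
        show _ = _; simp)
      have h2 := this.2
      simp at h2
  · intro M hM
    have h10 : M 1 0 = 0 := hM
    by_cases h01 : M 0 1 = 0
    · exact Or.inl ⟨h10, h01⟩
    · by_cases hd : M 0 0 = M 1 1
      · exact Or.inr (Or.inl ⟨h10, hd⟩)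
      · refine Or.inr (Or.inr ⟨h10, ?_⟩)
        have : ∀ x y z : ZMod 2, x ≠ 0 → y ≠ z → x = y + z := by decide
        exact this _ _ _ h01 hd
end

section
/- For all real x > 1, the prime power counting function satisfies Π(x) < 8x / log₂(x), where Π(x) counts integers m with 2 ≤ m ≤ x that are prime powers p^k (k ≥ 1). -/
/-!
A prime power `p ^ k ≤ x` that is not a prime above `√x` has `p ≤ √x` and `k ≤ log₂ x`, so there
are at most `√x · log₂ x` of those. The primes in `(√x, x]` each contribute more than `log √x`
to Chebyshev's `θ(x) ≤ x log 4`, so there are at most `4x / log₂ x` of them. Hence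
`Π(x) log₂ x ≤ 4x + √x (log₂ x)²`, which is below `8x` once `log₂ x ≥ 10`. For smaller `x`
every prime power is odd or a power of two, and `Π(x) ≤ x / 2 + log₂ x` suffices.
-/

open Finset Real Chebyshev

lemma natCard_isPrimePow_le_eq_card_filter {x : ℝ} (hx : 0 ≤ x) :
    Nat.card {m : ℕ // 2 ≤ m ∧ (m : ℝ) ≤ x ∧ IsPrimePow m} = #{m ∈ Iic ⌊x⌋₊ | IsPrimePow m} :=
  Nat.subtype_card _ fun m ↦ by
    simp only [mem_filter, mem_Iic, Nat.le_floor_iff hx]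
    exact ⟨fun h ↦ ⟨h.2.two_le, h⟩, fun h ↦ h.2⟩

lemma le_log_two_of_prime_pow_le {p k n : ℕ} (hp : p.Prime) (h : p ^ k ≤ n) :
    k ≤ Nat.log 2 n :=
  Nat.le_log_of_pow_le one_lt_two ((Nat.pow_le_pow_left hp.two_le k).trans h)

lemma natLog_floor_le_logb_lt_add_one {x : ℝ} (hx : 1 ≤ x) :
    (Nat.log 2 ⌊x⌋₊ : ℝ) ≤ logb 2 x ∧ logb 2 x < Nat.log 2 ⌊x⌋₊ + 1 := by
  have h := Real.floor_logb_natCast (b := 2) (by linarith : (0 : ℝ) ≤ x)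
  rw [Int.log_of_one_le_right 2 hx, Nat.cast_ofNat] at h
  exact ⟨by exact_mod_cast h ▸ Int.floor_le (logb 2 x),
    by exact_mod_cast h ▸ Int.lt_floor_add_one (logb 2 x)⟩

lemma two_pow_natLog_floor_le {x : ℝ} (hx : 1 ≤ x) : (2 : ℝ) ^ Nat.log 2 ⌊x⌋₊ ≤ x := by
  have hn : ⌊x⌋₊ ≠ 0 := Nat.pos_iff_ne_zero.1 ((Nat.one_le_floor_iff x).2 hx)
  calc (2 : ℝ) ^ Nat.log 2 ⌊x⌋₊ ≤ ⌊x⌋₊ := by exact_mod_cast Nat.pow_log_le_self 2 hn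
    _ ≤ x := Nat.floor_le (by linarith)

theorem card_isPrimePow_le_half_add_log (n : ℕ) :
    #{m ∈ Iic n | IsPrimePow m} ≤ n / 2 + Nat.log 2 n := by
  have hsub : {m ∈ Iic n | IsPrimePow m} ⊆
      (Icc 1 (n / 2)).image (fun j ↦ 2 * j + 1) ∪ (Icc 1 (Nat.log 2 n)).image (2 ^ ·) := by
    intro m hm
    obtain ⟨hmn, p, k, hp, hk, rfl⟩ : m ≤ n ∧ ∃ p k, p.Prime ∧ 0 < k ∧ p ^ k = m := by
      simpa [isPrimePow_nat_iff] using hm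
    rcases hp.eq_two_or_odd' with rfl | hpodd
    · exact mem_union_right _ <| mem_image.2
        ⟨k, mem_Icc.2 ⟨hk, le_log_two_of_prime_pow_le Nat.prime_two hmn⟩, rfl⟩
    · have hodd : p ^ k % 2 = 1 := Nat.odd_iff.1 hpodd.pow
      have htwo : 2 ≤ p ^ k := hp.two_le.trans (Nat.le_self_pow hk.ne' p)
      exact mem_union_left _ <| mem_image.2
        ⟨p ^ k / 2, mem_Icc.2 ⟨by omega, Nat.div_le_div_right hmn⟩, by omega⟩
  calc _ ≤ _ := card_le_card hsub
    _ ≤ _ := card_union_le _ _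
    _ ≤ #(Icc 1 (n / 2)) + #(Icc 1 (Nat.log 2 n)) := add_le_add card_image_le card_image_le
    _ = n / 2 + Nat.log 2 n := by simp

theorem card_isPrimePow_le_card_primes_gt_sqrt_add (n : ℕ) :
    #{m ∈ Iic n | IsPrimePow m} ≤
      #{p ∈ Nat.primesLE n | Nat.sqrt n < p} + Nat.sqrt n * Nat.log 2 n := by
  have hsub : {m ∈ Iic n | IsPrimePow m} ⊆ {p ∈ Nat.primesLE n | Nat.sqrt n < p} ∪
      (Icc 1 (Nat.sqrt n) ×ˢ Icc 1 (Nat.log 2 n)).image (fun q ↦ q.1 ^ q.2) := by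
    intro m hm
    obtain ⟨hmn, p, k, hp, hk, rfl⟩ : m ≤ n ∧ ∃ p k, p.Prime ∧ 0 < k ∧ p ^ k = m := by
      simpa [isPrimePow_nat_iff] using hm
    by_cases hbig : k = 1 ∧ Nat.sqrt n < p
    · obtain ⟨rfl, hlt⟩ := hbig
      rw [pow_one] at hmn ⊢
      exact mem_union_left _ (mem_filter.2 ⟨Nat.mem_primesLE.2 ⟨hmn, hp⟩, hlt⟩)
    · have hps : p ≤ Nat.sqrt n := by
        rcases Nat.lt_or_ge k 2 with hk1 | hk2
        · exact not_lt.1 fun h ↦ hbig ⟨by omega, h⟩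
        · exact Nat.le_sqrt'.2 ((Nat.pow_le_pow_right hp.pos hk2).trans hmn)
      exact mem_union_right _ <| mem_image.2 ⟨(p, k), mem_product.2
        ⟨mem_Icc.2 ⟨hp.pos, hps⟩, mem_Icc.2 ⟨hk, le_log_two_of_prime_pow_le hp hmn⟩⟩, rfl⟩
  calc _ ≤ _ := card_le_card hsub
    _ ≤ _ := card_union_le _ _
    _ ≤ _ := add_le_add_right card_image_le _
    _ = _ := by simp

theorem card_primesLE_gt_mul_log_le (n a : ℕ) :
    #{p ∈ Nat.primesLE n | a < p} * log (a + 1) ≤ log 4 * n :=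
  calc #{p ∈ Nat.primesLE n | a < p} * log (a + 1)
      ≤ ∑ p ∈ Nat.primesLE n with a < p, log p := by
        rw [← nsmul_eq_mul]
        refine card_nsmul_le_sum _ _ _ fun p hp ↦ log_le_log (by positivity) ?_
        exact_mod_cast (mem_filter.1 hp).2
    _ ≤ ∑ p ∈ Nat.primesLE n, log p :=
        sum_le_sum_of_subset_of_nonneg (filter_subset _ _) fun p _ _ ↦ log_natCast_nonneg p
    _ = θ n := (theta_eq_sum_primesLE_log n).symm
    _ ≤ log 4 * n := theta_le_log4_mul_x n.cast_nonneg

theorem card_primes_gt_sqrt_mul_logb_le {x : ℝ} (hx : 1 ≤ x) :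
    #{p ∈ Nat.primesLE ⌊x⌋₊ | Nat.sqrt ⌊x⌋₊ < p} * logb 2 x ≤ 4 * x := by
  set n := ⌊x⌋₊
  set s := Nat.sqrt n
  have hxs : x < ((s + 1 : ℕ) : ℝ) ^ 2 := by
    have : n + 1 ≤ (s + 1) ^ 2 := Nat.lt_succ_sqrt' n
    calc x < n + 1 := Nat.lt_floor_add_one x
      _ ≤ _ := by exact_mod_cast this
  have hlog : log x < 2 * log (s + 1) := by
    have := log_lt_log (by linarith) hxs
    rwa [log_pow, Nat.cast_ofNat, Nat.cast_succ] at this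
  have hlog4 : log 4 = 2 * log 2 := by
    rw [show (4 : ℝ) = 2 ^ 2 by norm_num, log_pow, Nat.cast_ofNat]
  have hn : (n : ℝ) ≤ x := Nat.floor_le (by linarith)
  rw [logb, mul_div_assoc', div_le_iff₀ (log_pos one_lt_two)]
  calc #{p ∈ Nat.primesLE n | s < p} * log x
      ≤ #{p ∈ Nat.primesLE n | s < p} * (2 * log (s + 1)) := by gcongr
    _ = 2 * (#{p ∈ Nat.primesLE n | s < p} * log (s + 1)) := by ring
    _ ≤ 2 * (log 4 * n) := by linarith [card_primesLE_gt_mul_log_le n s]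
    _ ≤ 4 * x * log 2 := by rw [hlog4]; nlinarith [log_pos one_lt_two]

-- `(x / 2 + t) (t + 1) ≤ 8x` rearranged, for `x ≥ 2 ^ t`.
lemma two_mul_mul_succ_le_two_pow_mul {t : ℕ} (ht : t ≤ 9) :
    (2 : ℝ) * t * (t + 1) ≤ 2 ^ t * (15 - t) := by
  interval_cases t <;> norm_num

lemma succ_pow_four_lt_two_pow {t : ℕ} (ht : 10 ≤ t) : (t + 1) ^ 4 < 2 ^ (t + 4) := by
  induction t, ht using Nat.le_induction with
  | base => norm_num
  | succ t ht ih =>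
    have ha : 11 ≤ t + 1 := by omega
    calc (t + 1 + 1) ^ 4 ≤ 2 * (t + 1) ^ 4 := by
          nlinarith [Nat.mul_le_mul_right ((t + 1) ^ 3) ha, Nat.mul_le_mul_right ((t + 1) ^ 2) ha]
      _ < 2 * 2 ^ (t + 4) := by omega
      _ = 2 ^ (t + 1 + 4) := by ring

theorem card_isPrimePow_mul_logb_lt_of_natLog_le_nine {x : ℝ} (hx : 1 < x)
    (ht : Nat.log 2 ⌊x⌋₊ ≤ 9) :
    #{m ∈ Iic ⌊x⌋₊ | IsPrimePow m} * logb 2 x < 8 * x := by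
  set t := Nat.log 2 ⌊x⌋₊
  have hL : 0 < logb 2 x := logb_pos one_lt_two hx
  have hLt := (natLog_floor_le_logb_lt_add_one hx.le).2
  have hcount : (#{m ∈ Iic ⌊x⌋₊ | IsPrimePow m} : ℝ) ≤ x / 2 + t := by
    have hhalf : ((⌊x⌋₊ / 2 : ℕ) : ℝ) ≤ x / 2 := by
      have := Nat.floor_le (by linarith : 0 ≤ x)
      exact Nat.cast_div_le.trans (by push_cast; linarith)
    have h : (#{m ∈ Iic ⌊x⌋₊ | IsPrimePow m} : ℝ) ≤ ((⌊x⌋₊ / 2 : ℕ) : ℝ) + t := by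
      exact_mod_cast card_isPrimePow_le_half_add_log ⌊x⌋₊
    linarith
  have hnum := two_mul_mul_succ_le_two_pow_mul ht
  have ht' : (t : ℝ) ≤ 9 := by exact_mod_cast ht
  have h2t := mul_le_mul_of_nonneg_right (two_pow_natLog_floor_le hx.le)
    (by linarith : (0 : ℝ) ≤ 15 - t)
  calc _ ≤ (x / 2 + t) * logb 2 x := by gcongr
    _ < (x / 2 + t) * (t + 1) := by gcongr
    _ ≤ 8 * x := by nlinarith

theorem card_isPrimePow_mul_logb_lt_of_ten_le_natLog {x : ℝ} (hx : 1 < x)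
    (ht : 10 ≤ Nat.log 2 ⌊x⌋₊) :
    #{m ∈ Iic ⌊x⌋₊ | IsPrimePow m} * logb 2 x < 8 * x := by
  set n := ⌊x⌋₊
  set t := Nat.log 2 n
  set s := Nat.sqrt n
  set L := logb 2 x
  have hL : 0 < L := logb_pos one_lt_two hx
  obtain ⟨htL, hLt⟩ := natLog_floor_le_logb_lt_add_one hx.le
  have hs : (s : ℝ) ^ 2 ≤ x :=
    (by exact_mod_cast Nat.sqrt_le' n : (s : ℝ) ^ 2 ≤ n).trans (Nat.floor_le (by linarith))
  have hL4 : L ^ 4 < 16 * x :=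
    calc L ^ 4 < (t + 1) ^ 4 := by gcongr
      _ < 2 ^ (t + 4) := by exact_mod_cast succ_pow_four_lt_two_pow ht
      _ = 16 * 2 ^ t := by ring
      _ ≤ 16 * x := by gcongr; exact two_pow_natLog_floor_le hx.le
  have hsmall : s * t * L < 4 * x := by
    refine lt_of_pow_lt_pow_left₀ 2 (by positivity) ?_
    calc (s * t * L) ^ 2 = s ^ 2 * t ^ 2 * L ^ 2 := by ring
      _ ≤ x * L ^ 2 * L ^ 2 := by gcongr
      _ = x * L ^ 4 := by ring
      _ < x * (16 * x) := by gcongr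
      _ = (4 * x) ^ 2 := by ring
  have hcount : (#{m ∈ Iic n | IsPrimePow m} : ℝ) ≤
      #{p ∈ Nat.primesLE n | s < p} + s * t := by
    exact_mod_cast card_isPrimePow_le_card_primes_gt_sqrt_add n
  have hprimes := card_primes_gt_sqrt_mul_logb_le hx.le
  calc _ ≤ (#{p ∈ Nat.primesLE n | s < p} + s * t : ℝ) * L := by gcongr
    _ = #{p ∈ Nat.primesLE n | s < p} * L + s * t * L := by ring
    _ < 8 * x := by linarith

/-- For all real `x > 1`, the prime power counting function satisfies
`Π(x) < 8x / log₂(x)`. -/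
theorem stmt_17 (x : ℝ) (hx : 1 < x) :
    (Nat.card {m : ℕ // 2 ≤ m ∧ (m : ℝ) ≤ x ∧ IsPrimePow m} : ℝ) <
      8 * x / Real.logb 2 x := by
  rw [natCard_isPrimePow_le_eq_card_filter (by linarith), lt_div_iff₀ (logb_pos one_lt_two hx)]
  rcases le_or_gt (Nat.log 2 ⌊x⌋₊) 9 with ht | ht
  · exact card_isPrimePow_mul_logb_lt_of_natLog_le_nine hx ht
  · exact card_isPrimePow_mul_logb_lt_of_ten_le_natLog hx ht
end

section
/- Let N > 1 be a natural number. The number of integers m with 2 ≤ m ≤ N expressible as q^n + binom(n,d)_{q₁} + ω(d), where q₁ is a prime power, d, n are integers with n ≥ 3 and 1 ≤ d < n, and q = q₁^d, is less than 72·N/log₂(N). -/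
open Finset Function

lemma gbinom_nonneg {q : ℕ} (hq : 1 ≤ q) (n k : ℕ) : 0 ≤ gbinom q n k := by
  have hq' : (1 : ℝ) ≤ q := by exact_mod_cast hq
  refine prod_nonneg fun i _ => div_nonneg ?_ ?_ <;>
    linarith [one_le_pow₀ hq' (n := n - i), one_le_pow₀ hq' (n := k - i)]

lemma pow_mul_le_of_cast_eq_add_gbinom {q n d m N : ℕ} (hq : 1 ≤ q)
    (hm : (m : ℝ) = ((q : ℝ) ^ d) ^ n + gbinom q n d + d.primeFactors.card) (hmN : m ≤ N) :
    q ^ (d * n) ≤ N := by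
  have hmN' : (m : ℝ) ≤ N := by exact_mod_cast hmN
  have : ((q : ℝ) ^ d) ^ n ≤ N := by
    linarith [gbinom_nonneg hq n d, (d.primeFactors.card.cast_nonneg : (0 : ℝ) ≤ _)]
  rw [← pow_mul] at this
  exact_mod_cast this

lemma pow_le_of_pow_mul_le {q d n k N : ℕ} (hq : 0 < q) (hd : 1 ≤ d) (hkn : k ≤ n)
    (h : q ^ (d * n) ≤ N) : q ^ k ≤ N :=
  (Nat.pow_le_pow_right hq (hkn.trans (Nat.le_mul_of_pos_left n hd))).trans h

lemma le_log_two_of_pow_mul_le {q d n N : ℕ} (hq : 2 ≤ q) (hd : 1 ≤ d)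
    (h : q ^ (d * n) ≤ N) : n ≤ Nat.log 2 N :=
  (Nat.le_log_iff_pow_le one_lt_two ((pow_pos (by omega) _).trans_le h).ne').mpr <|
    (Nat.pow_le_pow_left hq n).trans (pow_le_of_pow_mul_le (by omega) hd le_rfl h)

lemma Set.ncard_le_card_of_forall_exists_eq {α β γ : Type*} {S : Set β} {g : β → γ}
    (hg : Injective g) (f : α → γ) (T : Finset α) (h : ∀ b ∈ S, ∃ a ∈ T, f a = g b) :
    S.ncard ≤ T.card :=
  calc S.ncard = (g '' S).ncard := (Set.ncard_image_of_injective S hg).symm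
    _ ≤ (f '' T).ncard := Set.ncard_le_ncard (by
        rintro _ ⟨b, hb, rfl⟩
        exact h b hb) (T.finite_toSet.image f)
    _ ≤ (T : Set α).ncard := Set.ncard_image_le T.finite_toSet
    _ = T.card := Set.ncard_coe_finset T

lemma Real.logb_two_pow_nine_le {x : ℝ} (hx : 1 ≤ x) : Real.logb 2 x ^ 9 ≤ 20160 * x ^ 2 := by
  have hlog : 0 ≤ Real.log x := Real.log_nonneg hx
  have hexp : (2 * Real.log x) ^ 9 / 362880 ≤ x ^ 2 := by
    have h : Real.exp (2 * Real.log x) = x ^ 2 := by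
      rw [mul_comm, Real.exp_mul, Real.exp_log (by positivity), Real.rpow_two]
    simpa [Nat.factorial] using
      (Real.pow_div_factorial_le_exp _ (mul_nonneg zero_le_two hlog) 9).trans_eq h
  have hlog2 : (18 : ℝ) ≤ (2 * Real.log 2) ^ 9 :=
    calc (18 : ℝ) ≤ 1.386 ^ 9 := by norm_num
      _ ≤ _ := pow_le_pow_left₀ (by norm_num) (by linarith [Real.log_two_gt_d9]) 9
  have hlogb : 2 * Real.log x = 2 * Real.log 2 * Real.logb 2 x := by
    rw [Real.logb, mul_assoc, mul_div_cancel₀ _ (by positivity)]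
  rw [hlogb, mul_pow] at hexp
  nlinarith [pow_nonneg (Real.logb_nonneg one_lt_two hx) 9]

lemma mul_logb_two_pow_three_lt {M x : ℝ} (hMx : M ^ 3 ≤ x) (hx : 1 ≤ x) :
    M * Real.logb 2 x ^ 3 < 72 * x := by
  have hL := Real.logb_two_pow_nine_le hx
  have hL0 := pow_nonneg (Real.logb_nonneg one_lt_two hx) 9
  refine lt_of_pow_lt_pow_left₀ 3 (by positivity) ?_
  calc (M * Real.logb 2 x ^ 3) ^ 3 = M ^ 3 * Real.logb 2 x ^ 9 := by ring
    _ ≤ x * (20160 * x ^ 2) := mul_le_mul hMx hL hL0 (by linarith)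
    _ < (72 * x) ^ 3 := by nlinarith

lemma mem_box_of_cast_eq_add_gbinom {m N q n d : ℕ} (hmN : m ≤ N) (hq : 2 ≤ q) (hn : 3 ≤ n)
    (hd : 1 ≤ d) (hdn : d < n)
    (hm : (m : ℝ) = ((q : ℝ) ^ d) ^ n + gbinom q n d + d.primeFactors.card) :
    (q, n, d) ∈ Icc 2 (Nat.findGreatest (· ^ 3 ≤ N) N) ×ˢ Icc 3 (Nat.log 2 N) ×ˢ
      Icc 1 (Nat.log 2 N) := by
  have hpow := pow_mul_le_of_cast_eq_add_gbinom (by omega) hm hmN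
  have hq3 := pow_le_of_pow_mul_le (by omega) hd hn hpow
  have hnK := le_log_two_of_pow_mul_le hq hd hpow
  simp only [mem_product, mem_Icc]
  exact ⟨⟨hq, Nat.le_findGreatest ((Nat.le_self_pow three_ne_zero q).trans hq3) hq3⟩,
    ⟨hn, hnK⟩, hd, hdn.le.trans hnK⟩

/-- For `N > 1`, the number of integers `2 ≤ m ≤ N` expressible as
`q^n + binom(n,d)_{q₁} + ω(d)` with `q₁` a prime power, `n ≥ 3`, `1 ≤ d < n`, and
`q = q₁^d`, is less than `72·N/log₂(N)`. -/
theorem stmt_18 (N : ℕ) (hN : 1 < N) :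
    ({m : ℕ | 2 ≤ m ∧ m ≤ N ∧ ∃ q₁ n d : ℕ, IsPrimePow q₁ ∧ 3 ≤ n ∧ 1 ≤ d ∧ d < n ∧
        (m : ℝ) = ((q₁ : ℝ) ^ d) ^ n + gbinom q₁ n d + d.primeFactors.card}.ncard : ℝ) <
      72 * N / Real.logb 2 N := by
  set K := Nat.log 2 N
  set M := Nat.findGreatest (· ^ 3 ≤ N) N
  set L := Real.logb 2 N
  have hM : (M : ℝ) ^ 3 ≤ N := by
    exact_mod_cast Nat.findGreatest_spec (P := (· ^ 3 ≤ N)) (m := 1) (by omega) (by simpa using hN.le)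
  have hKL : (K : ℝ) ≤ L := Real.natLog_le_logb N 2
  have hL : 0 < L := Real.logb_pos one_lt_two (by exact_mod_cast hN)
  rw [lt_div_iff₀ hL]
  calc _ ≤ ((M * (K * K) : ℕ) : ℝ) * L := by
        gcongr
        refine (Set.ncard_le_card_of_forall_exists_eq Nat.cast_injective
          (fun p : ℕ × ℕ × ℕ => ((p.1 : ℝ) ^ p.2.2) ^ p.2.1 + gbinom p.1 p.2.1 p.2.2 +
            p.2.2.primeFactors.card) (Icc 2 M ×ˢ Icc 3 K ×ˢ Icc 1 K) ?_).trans ?_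
        · rintro m ⟨-, hmN, q₁, n, d, hq₁, hn, hd, hdn, hm⟩
          exact ⟨_, mem_box_of_cast_eq_add_gbinom hmN hq₁.two_le hn hd hdn hm, hm.symm⟩
        · simp only [card_product, Nat.card_Icc]
          gcongr <;> omega
    _ ≤ M * (L * L) * L := by
        push_cast
        gcongr
    _ = M * L ^ 3 := by ring
    _ < 72 * N := mul_logb_two_pow_three_lt hM (by exact_mod_cast hN.le)
end

section
/- Let R = R₁ ⊕ R₂ ⊕ ⋯ ⊕ R_t be a finite direct sum of rings such that every maximal subring M of R has the form R₁ ⊕ ⋯ ⊕ R_{i-1} ⊕ M_i ⊕ R_{i+1} ⊕ ⋯ ⊕ R_t for some index i and some maximal subring M_i of R_i. Then σ(R) = min_{1≤i≤t} σ(R_i), where σ denotes the minimal size of a cover by proper subrings (∞ if no cover exists). -/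
/-- The covering number of a ring: the minimal cardinality of a cover by proper
subrings, or `⊤` (i.e. `∞`) if no such cover exists. -/
noncomputable def ringCoveringNumber (R : Type*) [NonUnitalRing R] : ℕ∞ :=
  sInf {n : ℕ∞ | ∃ C : Finset (NonUnitalSubring R),
    (∀ S ∈ C, S ≠ ⊤) ∧ (∀ x : R, ∃ S ∈ C, x ∈ S) ∧ (C.card : ℕ∞) = n}

lemma ringCoveringNumber_le_card {R : Type*} [NonUnitalRing R]
    (C : Finset (NonUnitalSubring R)) (h1 : ∀ S ∈ C, S ≠ ⊤)
    (h2 : ∀ x : R, ∃ S ∈ C, x ∈ S) :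
    ringCoveringNumber R ≤ (C.card : ℕ∞) :=
  sInf_le ⟨C, h1, h2, rfl⟩

/-- Let `R = ⊕_{i} R_i` be a finite direct sum of rings (each proper subring of the
rings involved being contained in a maximal one, e.g. all rings finite) such that every
maximal subring `M` of `R` has the form `R₁ ⊕ ⋯ ⊕ M_i ⊕ ⋯ ⊕ R_t` for some `i` and some
maximal subring `M_i` of `R_i`.  Then `σ(R) = min_i σ(R_i)`. -/
theorem stmt_19 {ι : Type*} [Fintype ι] [Nonempty ι] (R : ι → Type*)
    [∀ i, NonUnitalRing (R i)]
    (hmaxR : ∀ S : NonUnitalSubring (∀ i, R i), S ≠ ⊤ →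
      ∃ M : NonUnitalSubring (∀ i, R i), S ≤ M ∧ M ≠ ⊤ ∧
        ∀ N : NonUnitalSubring (∀ i, R i), M < N → N = ⊤)
    (hmaxi : ∀ i, ∀ S : NonUnitalSubring (R i), S ≠ ⊤ →
      ∃ M : NonUnitalSubring (R i), S ≤ M ∧ M ≠ ⊤ ∧
        ∀ N : NonUnitalSubring (R i), M < N → N = ⊤)
    (hform : ∀ M : NonUnitalSubring (∀ i, R i),
      (M ≠ ⊤ ∧ ∀ N : NonUnitalSubring (∀ i, R i), M < N → N = ⊤) →
      ∃ i, ∃ Mi : NonUnitalSubring (R i),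
        (Mi ≠ ⊤ ∧ ∀ N : NonUnitalSubring (R i), Mi < N → N = ⊤) ∧
        (M : Set (∀ i, R i)) = {x | x i ∈ Mi}) :
    ringCoveringNumber (∀ i, R i) = ⨅ i, ringCoveringNumber (R i) := by
  classical
  apply le_antisymm
  · -- σ(Π) ≤ σ(R i) for each i
    refine le_iInf fun i => le_sInf ?_
    rintro n ⟨C, hC1, hC2, rfl⟩
    set f : NonUnitalSubring (R i) → NonUnitalSubring (∀ i, R i) :=
      fun S => S.comap (Pi.evalNonUnitalRingHom R i) with hf
    refine le_trans (ringCoveringNumber_le_card (C.image f) ?_ ?_)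
      (by exact_mod_cast Finset.card_image_le)
    · intro T hT
      obtain ⟨S, hS, rfl⟩ := Finset.mem_image.mp hT
      intro htop
      apply hC1 S hS
      rw [eq_top_iff]
      intro r _
      have : Function.update (0 : ∀ i, R i) i r ∈ f S := htop ▸ trivial
      simpa [hf, NonUnitalSubring.mem_comap, Pi.evalNonUnitalRingHom_apply] using this
    · intro x
      obtain ⟨S, hS, hxS⟩ := hC2 (x i)
      exact ⟨f S, Finset.mem_image_of_mem f hS, hxS⟩
  · -- ⨅ σ(R i) ≤ σ(Π)
    refine le_sInf ?_
    rintro n ⟨C, hC1, hC2, rfl⟩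
    have h1 : ∀ S : {S // S ∈ C}, ∃ i, ∃ Mi : NonUnitalSubring (R i),
        Mi ≠ ⊤ ∧ ∀ x : ∀ i, R i, x ∈ S.1 → x i ∈ Mi := by
      rintro ⟨S, hS⟩
      obtain ⟨M, hSM, hM, hMmax⟩ := hmaxR S (hC1 S hS)
      obtain ⟨i, Mi, ⟨hMi, -⟩, hMeq⟩ := hform M ⟨hM, hMmax⟩
      refine ⟨i, Mi, hMi, fun x hx => ?_⟩
      have : x ∈ (M : Set (∀ i, R i)) := hSM hx
      rw [hMeq] at this
      exact this
    choose idx Msub hMne hMsub using h1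
    set g : {S // S ∈ C} → ∀ i, NonUnitalSubring (R i) := fun S i =>
      if h : idx S = i then h ▸ Msub S else ⊤ with hg
    set D : ∀ i, Finset (NonUnitalSubring (R i)) := fun i =>
      (C.attach.filter (fun S => idx S = i)).image (fun S => g S i) with hD
    -- some coordinate i₀ is covered by D i₀
    have hcov : ∃ i, ∀ x : R i, ∃ T ∈ D i, x ∈ T := by
      by_contra hno
      push_neg at hno
      choose x hx using hno
      obtain ⟨S, hS, hxS⟩ := hC2 (fun i => x i)
      set S' : {S // S ∈ C} := ⟨S, hS⟩
      have hmem : x (idx S') ∈ Msub S' := hMsub S' _ hxS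
      have hgD : g S' (idx S') ∈ D (idx S') := by
        refine Finset.mem_image.mpr ⟨S', Finset.mem_filter.mpr
          ⟨Finset.mem_attach _ _, rfl⟩, rfl⟩
      have hgeq : g S' (idx S') = Msub S' := by simp [hg]
      exact hx (idx S') (g S' (idx S')) hgD (hgeq ▸ hmem)
    obtain ⟨i, hi⟩ := hcov
    have hproper : ∀ T ∈ D i, T ≠ ⊤ := by
      intro T hT
      obtain ⟨S, hSf, rfl⟩ := Finset.mem_image.mp hT
      have hidx : idx S = i := (Finset.mem_filter.mp hSf).2
      subst hidx
      simpa [hg] using hMne S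
    have hcard : ((D i).card : ℕ∞) ≤ (C.card : ℕ∞) := by
      have : (D i).card ≤ C.card := by
        calc (D i).card ≤ (C.attach.filter (fun S => idx S = i)).card :=
              Finset.card_image_le
          _ ≤ C.attach.card := Finset.card_filter_le _ _
          _ = C.card := Finset.card_attach
      exact_mod_cast this
    exact le_trans (iInf_le _ i) (le_trans (ringCoveringNumber_le_card (D i) hproper hi) hcard)
end
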